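/- arXiv:1912.06278 — 2 statements merged into one kernel-verified Lean document; each statement's English description precedes it below -/
import Mathlib

section
/- Let B = [b_1,…,b_n] be a basis of a full-rank lattice Λ(B) in ℝ^n. For every index i, the component of b_i orthogonal to the span of the other basis vectors is at most the last successive minimum: ‖π^⊥_{B_{[n]∖i}}(b_i)‖ ≤ λ_n(B). -/
open Finset

noncomputable section

/-- `ℝ^n` with the Euclidean norm. -/
abbrev Euc (n : ℕ) := EuclideanSpace ℝ (Fin n)

/-- The lattice generated by the columns `B 1, …, B n`. -/
def lattice {n : ℕ} (B : Fin n → Euc n) : Set (Euc n) :=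
  {v | ∃ c : Fin n → ℤ, v = ∑ i, (c i : ℝ) • B i}

/-- The sublattice generated by all the columns of `B` except the `i`-th one. -/
def subLattice {n : ℕ} (B : Fin n → Euc n) (i : Fin n) : Set (Euc n) :=
  {v | ∃ c : Fin n → ℤ, c i = 0 ∧ v = ∑ j, (c j : ℝ) • B j}

/-- The `k`-th successive minimum `λ_k(B)` of the lattice generated by `B`. -/
def succMin {n : ℕ} (B : Fin n → Euc n) (k : ℕ) : ℝ :=
  sInf {r : ℝ | ∃ v : Fin k → Euc n, (∀ j, v j ∈ lattice B) ∧
    LinearIndependent ℝ v ∧ ∀ j, ‖v j‖ ≤ r}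

/-- `B` is SR-CVP reduced if no vector of the sublattice generated by the other basis
vectors can shorten a basis vector. -/
def SRCVPReduced {n : ℕ} (B : Fin n → Euc n) : Prop :=
  ∀ i : Fin n, ∀ s ∈ subLattice B i, ‖B i‖ ≤ ‖B i - s‖

/-!
Let `W` be the span of the basis vectors other than `b_i` and `P` the orthogonal projection
onto `Wᗮ`. Any `n` linearly independent lattice vectors cannot all lie in the hyperplane `W`,
so one of them, `v = ∑ c_k b_k`, has `c_i ≠ 0`. Since `P` kills `W`, `P v = c_i • P b_i`, and
as `|c_i| ≥ 1` and `P` is norm non-increasing, `‖P b_i‖ ≤ ‖P v‖ ≤ ‖v‖`.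
-/

open Submodule

theorem LinearIndependent.exists_notMem_of_ne_top {ι K V : Type*} [Fintype ι] [DivisionRing K]
    [AddCommGroup V] [Module K V] [FiniteDimensional K V] {v : ι → V}
    (hv : LinearIndependent K v) (hcard : Fintype.card ι = Module.finrank K V)
    {W : Submodule K V} (hW : W ≠ ⊤) : ∃ j, v j ∉ W := by
  by_contra! h
  exact hW <| eq_top_iff.2 <|
    (hv.span_eq_top_of_card_eq_finrank' hcard).ge.trans (span_le.2 (Set.range_subset_iff.2 h))

theorem sum_smul_sub_smul_mem_span_image_ne {ι R M : Type*} [Fintype ι] [Ring R]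
    [AddCommGroup M] [Module R M] (B : ι → M) (a : ι → R) (i : ι) :
    ∑ k, a k • B k - a i • B i ∈ span R (B '' {j | j ≠ i}) := by
  classical
  rw [← Finset.sum_erase_eq_sub (Finset.mem_univ i)]
  exact sum_mem fun k hk => smul_mem _ _ (subset_span ⟨k, Finset.ne_of_mem_erase hk, rfl⟩)

theorem norm_orthogonalProjectionOnto_le_of_int_combination_notMem_span {ι E : Type*}
    [Fintype ι] [NormedAddCommGroup E] [InnerProductSpace ℝ E] [FiniteDimensional ℝ E]
    (B : ι → E) (i : ι) (c : ι → ℤ)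
    (hc : ∑ k, (c k : ℝ) • B k ∉ span ℝ (B '' {j | j ≠ i})) :
    ‖((span ℝ (B '' {j | j ≠ i}))ᗮ.orthogonalProjectionOnto (B i) : E)‖ ≤
      ‖∑ k, (c k : ℝ) • B k‖ := by
  set W := span ℝ (B '' {j | j ≠ i})
  set v := ∑ k, (c k : ℝ) • B k
  set P := Wᗮ.orthogonalProjectionOnto
  have hvW : v - (c i : ℝ) • B i ∈ W := sum_smul_sub_smul_mem_span_image_ne B _ i
  have hci : c i ≠ 0 := fun h => hc (by simpa [h] using hvW)
  have hPv : P v = (c i : ℝ) • P (B i) := by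
    rw [← map_smul, ← sub_eq_zero, ← map_sub]
    exact orthogonalProjectionOnto_orthogonal_apply_eq_zero hvW
  calc ‖(P (B i) : E)‖ ≤ |(c i : ℝ)| * ‖(P (B i) : E)‖ :=
        le_mul_of_one_le_left (norm_nonneg _) (by exact_mod_cast Int.one_le_abs hci)
    _ = ‖P v‖ := by rw [hPv, norm_smul, Real.norm_eq_abs]; rfl
    _ ≤ ‖v‖ := norm_orthogonalProjectionOnto_apply_le _ _

theorem mem_lattice_self {n : ℕ} (B : Fin n → Euc n) (j : Fin n) : B j ∈ lattice B :=
  ⟨Pi.single j 1, by simp [Pi.single_apply]⟩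

theorem le_succMin_of_forall {n : ℕ} {B : Fin n → Euc n} (hB : LinearIndependent ℝ B) {x : ℝ}
    (h : ∀ (v : Fin n → Euc n) (r : ℝ), (∀ j, v j ∈ lattice B) → LinearIndependent ℝ v →
      (∀ j, ‖v j‖ ≤ r) → x ≤ r) :
    x ≤ succMin B n :=
  le_csInf ⟨∑ j, ‖B j‖, B, mem_lattice_self B, hB,
      fun j => single_le_sum (f := fun k => ‖B k‖) (fun _ _ => norm_nonneg _) (mem_univ j)⟩
    fun _ ⟨v, hv_lattice, hv_indep, hv_le⟩ => h v _ hv_lattice hv_indep hv_le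

theorem orth_component_le_last_succMin {n : ℕ}
    (B : Fin n → Euc n) (hB : LinearIndependent ℝ B) (i : Fin n) :
    ‖(Submodule.orthogonalProjectionOnto (Submodule.span ℝ (B '' {j | j ≠ i}))ᗮ (B i) : Euc n)‖ ≤
      succMin B n := by
  have hW : span ℝ (B '' {j | j ≠ i}) ≠ ⊤ := fun h =>
    hB.notMem_span_image (s := {j | j ≠ i}) (x := i) (by simp) (h ▸ mem_top)
  refine le_succMin_of_forall hB fun v r hv_lattice hv_indep hv_le => ?_
  obtain ⟨j, hj⟩ := hv_indep.exists_notMem_of_ne_top (by simp) hW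
  obtain ⟨c, hc⟩ := hv_lattice j
  rw [hc] at hj
  calc _ ≤ ‖v j‖ := hc ▸ norm_orthogonalProjectionOnto_le_of_int_combination_notMem_span B i c hj
    _ ≤ r := hv_le j
end
end

section
/- Let τ ∈ (0,1] and let B = [b_1,…,b_n] be a basis of a full-rank lattice Λ(B) in ℝ^n such that for every i and every s ∈ Λ(B_{[n]∖i}) one has τ‖b_i‖² ≤ ‖b_i − s‖² (the termination condition of SR with threshold τ). If n < 4τ + 1, then l(B) := max_i ‖b_i‖ ≤ √(4n/(4τ − n + 1)) · λ_n(B). -/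
open Finset

noncomputable section

/-!
Let `b_m` be a longest basis vector, `K` the span of the other basis vectors and `p` the component
of `b_m` orthogonal to `K`. Babai's nearest plane rounding finds `s` in the sublattice with
`‖π_K b_m - s‖² ≤ ¼ ∑_{j ≠ m} ‖b_j‖² ≤ ¼ (n - 1) ‖b_m‖²`, so the termination condition at `s` gives
`τ ‖b_m‖² ≤ ‖p‖² + ¼ (n - 1) ‖b_m‖²`. Conversely, of any `n` independent lattice vectors one
leaves `K`, so it has a nonzero integer `b_m`-coordinate and is at least `‖p‖` long: `‖p‖ ≤ λ_n`.
Together, `(4τ - n + 1) ‖b_m‖² ≤ 4 λ_n²`.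
-/

lemma LinearIndependent.exists_notMem_of_finrank_lt {R M ι : Type*} [Ring R]
    [StrongRankCondition R] [AddCommGroup M] [Module R M] [Fintype ι] {v : ι → M}
    (hv : LinearIndependent R v) (K : Submodule R M) [Module.Finite R K]
    (hK : Module.finrank R K < Fintype.card ι) : ∃ k, v k ∉ K := by
  by_contra! hvK
  have := (LinearIndependent.of_comp K.subtype (v := fun k => (⟨v k, hvK k⟩ : K)) hv)
    |>.fintype_card_le_finrank
  omega

section InnerProductSpace

variable {ι E : Type*} [NormedAddCommGroup E] [InnerProductSpace ℝ E]

lemma sum_intCast_smul_mem_span [Fintype ι] (b : ι → E) {t : Set ι} {c : ι → ℤ}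
    (hc : ∀ j ∉ t, c j = 0) : ∑ j, (c j : ℝ) • b j ∈ Submodule.span ℝ (b '' t) := by
  refine Submodule.sum_mem _ fun j _ => ?_
  by_cases hj : j ∈ t
  · exact Submodule.smul_mem _ _ (Submodule.subset_span ⟨j, hj, rfl⟩)
  · simp [hc j hj]

lemma norm_add_sq_of_mem_orthogonal {K : Submodule ℝ E} {u v : E} (hu : u ∈ K) (hv : v ∈ Kᗮ) :
    ‖v + u‖ ^ 2 = ‖v‖ ^ 2 + ‖u‖ ^ 2 := by
  rw [norm_add_sq_real, real_inner_comm, Submodule.inner_right_of_mem_orthogonal hu hv]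
  ring

lemma norm_sub_starProjection_le_norm_intCast_smul_add (K : Submodule ℝ E)
    [K.HasOrthogonalProjection] (x : E) {u : E} (hu : u ∈ K) {m : ℤ} (hm : m ≠ 0) :
    ‖x - K.starProjection x‖ ≤ ‖(m : ℝ) • x + u‖ := by
  have hsplit : (m : ℝ) • x + u = (m : ℝ) • (x - K.starProjection x)
      + ((m : ℝ) • K.starProjection x + u) := by module
  have hm1 : (1 : ℝ) ≤ (m : ℝ) ^ 2 :=
    (one_le_sq_iff_one_le_abs _).mpr (by exact_mod_cast Int.one_le_abs hm)
  have hsq : ‖x - K.starProjection x‖ ^ 2 ≤ ‖(m : ℝ) • x + u‖ ^ 2 := by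
    have hin : (m : ℝ) • K.starProjection x + u ∈ K :=
      K.add_mem (K.smul_mem _ (K.starProjection_apply_mem x)) hu
    rw [hsplit, norm_add_sq_of_mem_orthogonal hin
      (Kᗮ.smul_mem _ (K.sub_starProjection_mem_orthogonal x)), norm_smul, mul_pow,
      Real.norm_eq_abs, sq_abs]
    calc ‖x - K.starProjection x‖ ^ 2 ≤ (m : ℝ) ^ 2 * ‖x - K.starProjection x‖ ^ 2 :=
          le_mul_of_one_le_left (sq_nonneg _) hm1
      _ ≤ _ := le_add_of_nonneg_right (sq_nonneg _)
  exact (pow_le_pow_iff_left₀ (norm_nonneg _) (norm_nonneg _) two_ne_zero).mp hsq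

/-- Babai's nearest plane bound. -/
theorem exists_intCombination_norm_sub_sq_le [Fintype ι] [DecidableEq ι] (b : ι → E)
    (t : Finset ι) : ∀ w ∈ Submodule.span ℝ (b '' t), ∃ c : ι → ℤ, (∀ j ∉ t, c j = 0) ∧
      ‖w - ∑ j, (c j : ℝ) • b j‖ ^ 2 ≤ (1 / 4) * ∑ j ∈ t, ‖b j‖ ^ 2 := by
  induction t using Finset.induction with
  | empty =>
    intro w hw
    simp only [coe_empty, Set.image_empty, Submodule.span_empty, Submodule.mem_bot] at hw
    exact ⟨0, fun _ _ => rfl, by simp [hw]⟩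
  | @insert a s ha ih =>
    intro w hw
    rw [coe_insert, Set.image_insert_eq] at hw
    obtain ⟨x, z, hz, rfl⟩ := Submodule.mem_span_insert.mp hw
    set V := Submodule.span ℝ (b '' s)
    have : FiniteDimensional ℝ V :=
      FiniteDimensional.span_of_finite ℝ (s.finite_toSet.image b)
    set P := V.starProjection (b a)
    set r : ℤ := round x
    -- Round the coordinate of `b a` orthogonal to `V`, then recurse on the part lying in `V`.
    set u := (x - r) • P + z
    have hu : u ∈ V := V.add_mem (V.smul_mem _ (V.starProjection_apply_mem _)) hz
    obtain ⟨c, hc, hcu⟩ := ih u hu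
    refine ⟨c + Pi.single a r, fun j hj => ?_, ?_⟩
    · rw [mem_insert, not_or] at hj
      simp [hc j hj.2, Pi.single_eq_of_ne hj.1]
    have hsum : ∑ j, ((c + Pi.single a r : ι → ℤ) j : ℝ) • b j
        = (r : ℝ) • b a + ∑ j, (c j : ℝ) • b j := by
      simp only [Pi.add_apply, Int.cast_add, add_smul, sum_add_distrib]
      rw [add_comm, Fintype.sum_eq_single a fun j hj => by simp [Pi.single_eq_of_ne hj]]
      simp
    have hsplit : x • b a + z - ∑ j, ((c + Pi.single a r : ι → ℤ) j : ℝ) • b j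
        = (x - r) • (b a - P) + (u - ∑ j, (c j : ℝ) • b j) := by
      rw [hsum]; module
    have horth : (x - r) • (b a - P) ∈ Vᗮ :=
      Vᗮ.smul_mem _ (V.sub_starProjection_mem_orthogonal _)
    have hrest : u - ∑ j, (c j : ℝ) • b j ∈ V :=
      V.sub_mem hu (sum_intCast_smul_mem_span b hc)
    have hround : ‖(x - r) • (b a - P)‖ ^ 2 ≤ (1 / 4) * ‖b a‖ ^ 2 := by
      have hx : |x - r| ≤ 1 / 2 := abs_sub_round x
      have hP : ‖b a - P‖ ≤ ‖b a‖ := by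
        simpa [P] using Vᗮ.norm_starProjection_apply_le (b a)
      rw [norm_smul, Real.norm_eq_abs, mul_pow]
      calc |x - r| ^ 2 * ‖b a - P‖ ^ 2 ≤ (1 / 2) ^ 2 * ‖b a‖ ^ 2 := by gcongr
        _ = (1 / 4) * ‖b a‖ ^ 2 := by norm_num
    rw [hsplit, norm_add_sq_of_mem_orthogonal hrest horth, sum_insert ha]
    linarith

def otherSpan [Fintype ι] [DecidableEq ι] (b : ι → E) (i : ι) : Submodule ℝ E :=
  Submodule.span ℝ (b '' ↑({i}ᶜ : Finset ι))

end InnerProductSpace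

section Lattice

variable {n : ℕ} (B : Fin n → Euc n)

lemma finrank_otherSpan_lt (i : Fin n) : Module.finrank ℝ (otherSpan B i) < n := by
  calc Module.finrank ℝ (otherSpan B i) ≤ (({i}ᶜ : Finset (Fin n)).image B).card := by
        rw [otherSpan, ← coe_image]; exact finrank_span_finset_le_card _
    _ ≤ ({i}ᶜ : Finset (Fin n)).card := card_image_le
    _ < n := by
        rw [card_compl, card_singleton, Fintype.card_fin]; exact Nat.sub_one_lt_of_lt i.pos

lemma subLattice_subset_otherSpan (i : Fin n) : subLattice B i ⊆ otherSpan B i := by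
  rintro _ ⟨c, hci, rfl⟩
  exact sum_intCast_smul_mem_span B fun j hj => by simp_all

lemma exists_mem_subLattice_norm_sub_sq_le (i : Fin n) :
    ∀ w ∈ otherSpan B i, ∃ s ∈ subLattice B i,
      ‖w - s‖ ^ 2 ≤ (1 / 4) * ∑ j ∈ {i}ᶜ, ‖B j‖ ^ 2 := by
  intro w hw
  obtain ⟨c, hc, hwc⟩ := exists_intCombination_norm_sub_sq_le B {i}ᶜ w hw
  exact ⟨_, ⟨c, hc i (by simp), rfl⟩, hwc⟩

lemma norm_sub_starProjection_otherSpan_le {i : Fin n} {v : Euc n} (hv : v ∈ lattice B)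
    (hvi : v ∉ otherSpan B i) :
    ‖B i - (otherSpan B i).starProjection (B i)‖ ≤ ‖v‖ := by
  obtain ⟨c, rfl⟩ := hv
  have hci : c i ≠ 0 := fun hci =>
    hvi (subLattice_subset_otherSpan B i ⟨c, hci, rfl⟩)
  rw [Fintype.sum_eq_add_sum_compl i]
  refine norm_sub_starProjection_le_norm_intCast_smul_add _ _ ?_ hci
  exact Submodule.sum_mem _ fun j hj =>
    Submodule.smul_mem _ _ (Submodule.subset_span ⟨j, hj, rfl⟩)

lemma le_succMin {a : ℝ} (hB : LinearIndependent ℝ B)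
    (h : ∀ v : Fin n → Euc n, (∀ j, v j ∈ lattice B) → LinearIndependent ℝ v → ∃ k, a ≤ ‖v k‖) :
    a ≤ succMin B n := by
  refine le_csInf ⟨∑ j, ‖B j‖, B, fun j => ⟨Pi.single j 1, ?_⟩, hB, fun j =>
    single_le_sum (fun j _ => norm_nonneg (B j)) (mem_univ j)⟩ ?_
  · simp [Pi.single_apply, ite_smul]
  · rintro r ⟨v, hv, hvi, hvr⟩
    obtain ⟨k, hk⟩ := h v hv hvi
    exact hk.trans (hvr k)

lemma norm_sub_starProjection_otherSpan_le_succMin (hB : LinearIndependent ℝ B) (i : Fin n) :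
    ‖B i - (otherSpan B i).starProjection (B i)‖ ≤ succMin B n := by
  refine le_succMin B hB fun v hv hvi => ?_
  obtain ⟨k, hk⟩ := hvi.exists_notMem_of_finrank_lt _ (by simpa using finrank_otherSpan_lt B i)
  exact ⟨k, norm_sub_starProjection_otherSpan_le B (hv k) hk⟩

lemma mul_sq_norm_le_of_forall_subLattice {τ : ℝ} {i : Fin n}
    (hred : ∀ s ∈ subLattice B i, τ * ‖B i‖ ^ 2 ≤ ‖B i - s‖ ^ 2) :
    τ * ‖B i‖ ^ 2 ≤ ‖B i - (otherSpan B i).starProjection (B i)‖ ^ 2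
      + (1 / 4) * ∑ j ∈ {i}ᶜ, ‖B j‖ ^ 2 := by
  set K := otherSpan B i
  set P := K.starProjection (B i)
  obtain ⟨s, hs, hPs⟩ :=
    exists_mem_subLattice_norm_sub_sq_le B i P (K.starProjection_apply_mem _)
  have hpyth : ‖B i - s‖ ^ 2 = ‖B i - P‖ ^ 2 + ‖P - s‖ ^ 2 := by
    rw [← norm_add_sq_of_mem_orthogonal
      (K.sub_mem (K.starProjection_apply_mem _) (subLattice_subset_otherSpan B i hs))
      (K.sub_starProjection_mem_orthogonal _), sub_add_sub_cancel]
  linarith [hred s hs]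

lemma mul_sq_norm_le_of_forall_subLattice_of_isMax {τ : ℝ} {m : Fin n}
    (hred : ∀ s ∈ subLattice B m, τ * ‖B m‖ ^ 2 ≤ ‖B m - s‖ ^ 2) (hm : ∀ j, ‖B j‖ ≤ ‖B m‖) :
    (4 * τ - n + 1) * ‖B m‖ ^ 2 ≤ 4 * ‖B m - (otherSpan B m).starProjection (B m)‖ ^ 2 := by
  have hothers : ∑ j ∈ {m}ᶜ, ‖B j‖ ^ 2 ≤ (n - 1 : ℕ) * ‖B m‖ ^ 2 := by
    calc ∑ j ∈ {m}ᶜ, ‖B j‖ ^ 2 ≤ #{m}ᶜ • ‖B m‖ ^ 2 :=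
          sum_le_card_nsmul _ _ _ fun j _ => pow_le_pow_left₀ (norm_nonneg _) (hm j) 2
      _ = (n - 1 : ℕ) * ‖B m‖ ^ 2 := by
          rw [card_compl, card_singleton, Fintype.card_fin, nsmul_eq_mul]
  rw [Nat.cast_sub m.pos, Nat.cast_one] at hothers
  linear_combination 4 * mul_sq_norm_le_of_forall_subLattice B hred + hothers

end Lattice

theorem sr_tau_basis_length_bound_general {n : ℕ} (τ : ℝ)
    (B : Fin n → Euc n) (hB : LinearIndependent ℝ B)
    (hred : ∀ i : Fin n, ∀ s ∈ subLattice B i, τ * ‖B i‖ ^ 2 ≤ ‖B i - s‖ ^ 2)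
    (hn : (n : ℝ) < 4 * τ + 1) :
    ∀ i : Fin n, ‖B i‖ ≤ Real.sqrt (4 * n / (4 * τ - n + 1)) * succMin B n := by
  intro i
  obtain ⟨m, -, hm⟩ := exists_max_image univ (fun j => ‖B j‖) ⟨i, mem_univ i⟩
  set p := B m - (otherSpan B m).starProjection (B m)
  set D := 4 * τ - n + 1
  have hD : 0 < D := by linarith
  have hpm : D * ‖B m‖ ^ 2 ≤ 4 * ‖p‖ ^ 2 :=
    mul_sq_norm_le_of_forall_subLattice_of_isMax B (hred m) fun j => hm j (mem_univ j)
  have hp : ‖p‖ ≤ succMin B n := norm_sub_starProjection_otherSpan_le_succMin B hB m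
  have hn1 : (1 : ℝ) ≤ n := by exact_mod_cast i.pos
  calc ‖B i‖ ≤ ‖B m‖ := hm i (mem_univ i)
    _ ≤ √(4 / D) * ‖p‖ := by
        rw [← Real.sqrt_sq (norm_nonneg p), ← Real.sqrt_mul (by positivity),
          Real.le_sqrt (norm_nonneg _) (by positivity), div_mul_eq_mul_div, le_div_iff₀ hD]
        linarith
    _ ≤ √(4 * n / D) * succMin B n := by gcongr; linarith

theorem sr_tau_basis_length_bound {n : ℕ} (τ : ℝ) (hτ0 : 0 < τ) (hτ1 : τ ≤ 1)
    (B : Fin n → Euc n) (hB : LinearIndependent ℝ B)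
    (hred : ∀ i : Fin n, ∀ s ∈ subLattice B i, τ * ‖B i‖ ^ 2 ≤ ‖B i - s‖ ^ 2)
    (hn : (n : ℝ) < 4 * τ + 1) :
    ∀ i : Fin n, ‖B i‖ ≤ Real.sqrt (4 * n / (4 * τ - n + 1)) * succMin B n :=
  sr_tau_basis_length_bound_general τ B hB hred hn
end
end
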